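/- arXiv:1407.2725 — 4 statements merged into one kernel-verified Lean document; each statement's English description precedes it below -/
import Mathlib

section
/- Let B be a standard one-dimensional Brownian motion, λ > 0, and k ≥ 1 an integer. Set g_k(u) := u^k e^{−λu}/k!. Then almost surely the pathwise Wiener integral ∫₀ᵗ g_k(t−s) dB_s = ∫₀ᵗ [ (t−s)^{k−1}/(k−1)! − λ(t−s)^k/k! ] e^{−λ(t−s)} B_s ds is O(√(log t)); that is, limsup_{t→∞} |∫₀ᵗ g_k(t−s) dB_s| / √(log t) < ∞ almost surely. -/
/-!
Write `g (u) = u ^ k e^{-λu} / k!`, so that the integrand is `g' (t - s) B_s` and `g 0 = 0`.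
Subtracting `B_t` turns the integral into `∫₀ᵗ g' (t - s) (B_s - B_t) ds + g t · B_t`; since `g'`
and `g` decay exponentially, it suffices that almost surely
`|B_s - B_t| ≤ C (t - s + 3) (1 + √(log (t + 2)))` for `0 ≤ s ≤ t`. Telescoping over unit
intervals reduces this to `|B_t - B_n| ≤ C (1 + √(log (n + 2)))` on `[n, n + 1]`, which is a
Borel–Cantelli and dyadic chaining argument: a level-`m` dyadic increment in `[n, n + 1]` exceeds
`2 (1 + √(log (n + 2))) (m + 1) 2^{-m/2}` with probability at most `2 · 4^{-m} / (n + 2)²`, which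
is summable over the `2^m` increments of each level, over `m` and over `n`, while the thresholds
sum over `m` to `O(1 + √(log (n + 2)))`.
-/

open MeasureTheory ProbabilityTheory Filter

/-- A standard one-dimensional Brownian motion: continuous sample paths, `B 0 = 0`,
independent increments, and `B t - B s` centered Gaussian with variance `t - s`
for `0 ≤ s ≤ t`. -/
structure IsStdBM1 {Ω : Type*} [MeasureSpace Ω] (B : ℝ → Ω → ℝ) : Prop where
  measurable : ∀ t : ℝ, Measurable (B t)
  cont : ∀ ω : Ω, Continuous fun t : ℝ => B t ω
  init : ∀ ω : Ω, B 0 ω = 0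
  indep : ∀ (n : ℕ) (t : Fin (n + 1) → ℝ), 0 ≤ t 0 → Monotone t →
    iIndepFun
      (fun i : Fin n => fun ω => B (t i.succ) ω - B (t i.castSucc) ω) volume
  gauss : ∀ s t : ℝ, 0 ≤ s → s ≤ t →
    Measure.map (fun ω => B t ω - B s ω) volume = gaussianReal 0 (Real.toNNReal (t - s))

open Real Set Topology
open scoped Nat

lemma measureReal_abs_ge_le_of_map_eq_gaussianReal {Ω : Type*} [MeasurableSpace Ω]
    {μ : Measure Ω} [IsFiniteMeasure μ] {X : Ω → ℝ} (hX : AEMeasurable X μ) {v : NNReal}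
    (hlaw : μ.map X = gaussianReal 0 v) {a : ℝ} (ha : 0 ≤ a) :
    μ.real {ω | a ≤ |X ω|} ≤ 2 * exp (-a ^ 2 / (2 * v)) := by
  have hsub : HasSubgaussianMGF X v μ := by
    rw [← HasSubgaussianMGF.id_map_iff hX, hlaw]
    refine ⟨fun t ↦ integrable_exp_mul_gaussianReal t, fun t ↦ ?_⟩
    simp [mgf_id_gaussianReal]
  have hunion : {ω | a ≤ |X ω|} ⊆ {ω | a ≤ X ω} ∪ {ω | a ≤ (-X) ω} := by
    intro ω (hω : a ≤ |X ω|)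
    rcases le_abs'.mp hω with h | h
    · exact Or.inr (show a ≤ -X ω by linarith)
    · exact Or.inl h
  calc μ.real {ω | a ≤ |X ω|}
      ≤ μ.real {ω | a ≤ X ω} + μ.real {ω | a ≤ (-X) ω} :=
        (measureReal_mono hunion).trans (measureReal_union_le _ _)
    _ ≤ 2 * exp (-a ^ 2 / (2 * v)) := by
        linarith [hsub.measure_ge_le ha, hsub.neg.measure_ge_le ha]

lemma integral_exp_neg_mul_sub_le {c t : ℝ} (hc : 0 < c) :
    ∫ s in (0 : ℝ)..t, exp (-c * (t - s)) ≤ 1 / c := by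
  have hderiv : ∀ s ∈ uIcc 0 t,
      HasDerivAt (fun s ↦ exp (-c * (t - s)) / c) (exp (-c * (t - s))) s := fun s _ ↦
    ((((hasDerivAt_id' s).const_sub t).const_mul (-c)).exp.div_const c).congr_deriv
      (by field_simp)
  rw [intervalIntegral.integral_eq_sub_of_hasDerivAt hderiv
    (Continuous.intervalIntegrable (by fun_prop) _ _), sub_self, mul_zero, exp_zero]
  have : 0 < exp (-c * (t - 0)) / c := by positivity
  linarith

lemma abs_integral_comp_sub_mul_le {h G f : ℝ → ℝ} {A A' c R t : ℝ} (hc : 0 < c) (ht : 0 ≤ t)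
    (hR : 0 ≤ R) (hG : ∀ u, HasDerivAt G (h u) u) (hh : Continuous h) (hG0 : G 0 = 0)
    (hhA : ∀ u, 0 ≤ u → |h u| * (u + 3) ≤ A * exp (-c * u)) (hGA : |G t| * (t + 3) ≤ A')
    (hf : Continuous f) (hf0 : f 0 = 0)
    (hfR : ∀ s ∈ Icc 0 t, |f s - f t| ≤ (t - s + 3) * R) :
    |∫ s in (0 : ℝ)..t, h (t - s) * f s| ≤ (A / c + A') * R := by
  have hht : Continuous fun s ↦ h (t - s) := hh.comp (continuous_const.sub continuous_id)
  have hA : 0 ≤ A := (by positivity : (0 : ℝ) ≤ |h 0| * (0 + 3)).trans (by simpa using hhA 0 le_rfl)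
  have hsplit : ∫ s in (0 : ℝ)..t, h (t - s) * f s
      = (∫ s in (0 : ℝ)..t, h (t - s) * (f s - f t)) + G t * f t := by
    have hint : ∫ s in (0 : ℝ)..t, h (t - s) = G t := by
      rw [intervalIntegral.integral_comp_sub_left h t, sub_self, sub_zero,
        intervalIntegral.integral_eq_sub_of_hasDerivAt (fun u _ ↦ hG u) (hh.intervalIntegrable _ _),
        hG0, sub_zero]
    rw [← hint, ← intervalIntegral.integral_mul_const, ← intervalIntegral.integral_add
      (Continuous.intervalIntegrable (by fun_prop) _ _)
      (Continuous.intervalIntegrable (by fun_prop) _ _)]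
    exact intervalIntegral.integral_congr fun s _ ↦ by ring
  have hdiff : |∫ s in (0 : ℝ)..t, h (t - s) * (f s - f t)| ≤ A / c * R := calc
    _ ≤ ∫ s in (0 : ℝ)..t, |h (t - s) * (f s - f t)| :=
        intervalIntegral.abs_integral_le_integral_abs ht
    _ ≤ ∫ s in (0 : ℝ)..t, A * R * exp (-c * (t - s)) := by
        refine intervalIntegral.integral_mono_on ht
          ((hht.mul (hf.sub continuous_const)).abs.intervalIntegrable _ _)
          (Continuous.intervalIntegrable (by fun_prop) _ _) fun s hs ↦ ?_
        rw [abs_mul]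
        calc |h (t - s)| * |f s - f t| ≤ |h (t - s)| * ((t - s + 3) * R) := by
              gcongr; exact hfR s hs
          _ = |h (t - s)| * (t - s + 3) * R := by ring
          _ ≤ A * exp (-c * (t - s)) * R := by
              exact mul_le_mul_of_nonneg_right (hhA (t - s) (by linarith [hs.2])) hR
          _ = A * R * exp (-c * (t - s)) := by ring
    _ = A * R * ∫ s in (0 : ℝ)..t, exp (-c * (t - s)) := intervalIntegral.integral_const_mul _ _
    _ ≤ A * R * (1 / c) := by gcongr; exact integral_exp_neg_mul_sub_le hc
    _ = A / c * R := by ring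
  have hend : |G t * f t| ≤ A' * R := by
    have hft : |f t| ≤ (t + 3) * R := by
      simpa [hf0, abs_sub_comm] using hfR 0 ⟨le_rfl, ht⟩
    calc |G t * f t| ≤ |G t| * ((t + 3) * R) := by rw [abs_mul]; gcongr
      _ = |G t| * (t + 3) * R := by ring
      _ ≤ A' * R := by gcongr
  calc _ ≤ |∫ s in (0 : ℝ)..t, h (t - s) * (f s - f t)| + |G t * f t| := by
        rw [hsplit]; exact abs_add_le _ _
    _ ≤ (A / c + A') * R := by linarith

lemma exists_add_pow_mul_exp_neg_le {c a : ℝ} (hc : 0 < c) (ha : 0 ≤ a) (n : ℕ) :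
    ∃ K, ∀ x, 0 ≤ x → (x + a) ^ n * exp (-c * x) ≤ K * exp (-(c / 2) * x) := by
  refine ⟨n ! * (2 / c) ^ n * exp (c * a / 2), fun x hx ↦ ?_⟩
  have hfac : (0 : ℝ) < n ! := by positivity
  have key := pow_div_factorial_le_exp (x := c * (x + a) / 2) (by positivity) n
  rw [div_le_iff₀ hfac] at key
  have hpow : (x + a) ^ n = (2 / c) ^ n * (c * (x + a) / 2) ^ n := by
    rw [← mul_pow]; congr 1; field_simp
  calc (x + a) ^ n * exp (-c * x)
      ≤ (2 / c) ^ n * (exp (c * (x + a) / 2) * n !) * exp (-c * x) := by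
        rw [hpow]; gcongr
    _ = n ! * (2 / c) ^ n * exp (c * a / 2) * exp (-(c / 2) * x) := by
        rw [show -(c / 2) * x = c * (x + a) / 2 + -c * x - c * a / 2 by ring, exp_sub, exp_add]
        field_simp

lemma exists_kernel_bound {lam : ℝ} (hlam : 0 < lam) (k : ℕ) :
    ∃ A, ∀ u, 0 ≤ u →
      |(u ^ (k - 1) / (k - 1)! - lam * u ^ k / k !) * exp (-lam * u)| * (u + 3)
          ≤ A * exp (-(lam / 2) * u) ∧
        |u ^ k * exp (-lam * u) / k !| * (u + 3) ≤ A := by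
  obtain ⟨K, hK⟩ := exists_add_pow_mul_exp_neg_le hlam (by norm_num : (0 : ℝ) ≤ 3) (k + 1)
  refine ⟨(1 / (k - 1)! + lam / k ! + 1 / k !) * K, fun u hu ↦ ?_⟩
  have hmonomial : ∀ j ≤ k, u ^ j * (u + 3) * exp (-lam * u) ≤ K * exp (-(lam / 2) * u) :=
    fun j hj ↦ calc
      _ ≤ (u + 3) ^ j * (u + 3) * exp (-lam * u) := by
          gcongr
          linarith
      _ ≤ (u + 3) ^ (k + 1) * exp (-lam * u) := by
          rw [← pow_succ]
          gcongr
          linarith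
      _ ≤ _ := hK u hu
  have hK0 : 0 ≤ K := by
    have h0 := hK 0 le_rfl
    simp only [mul_zero, exp_zero, mul_one, zero_add] at h0
    exact (by positivity : (0 : ℝ) ≤ 3 ^ (k + 1)).trans h0
  have hE : exp (-(lam / 2) * u) ≤ 1 := exp_le_one_iff.mpr (by nlinarith)
  constructor
  · calc _ ≤ (u ^ (k - 1) / (k - 1)! + lam * u ^ k / k !) * exp (-lam * u) * (u + 3) := by
          rw [abs_mul, abs_of_pos (exp_pos _)]
          gcongr
          exact (abs_sub _ _).trans_eq (by rw [abs_of_nonneg (by positivity),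
            abs_of_nonneg (by positivity)])
      _ = 1 / (k - 1)! * (u ^ (k - 1) * (u + 3) * exp (-lam * u))
            + lam / k ! * (u ^ k * (u + 3) * exp (-lam * u)) := by ring
      _ ≤ 1 / (k - 1)! * (K * exp (-(lam / 2) * u)) + lam / k ! * (K * exp (-(lam / 2) * u)) := by
          have h1 : (0 : ℝ) ≤ 1 / (k - 1)! := by positivity
          have h2 : 0 ≤ lam / k ! := by positivity
          exact add_le_add (mul_le_mul_of_nonneg_left (hmonomial (k - 1) (by omega)) h1)
            (mul_le_mul_of_nonneg_left (hmonomial k le_rfl) h2)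
      _ ≤ _ := by
          have : 0 ≤ 1 / (k ! : ℝ) * K * exp (-(lam / 2) * u) := by positivity
          linarith
  · calc _ = 1 / k ! * (u ^ k * (u + 3) * exp (-lam * u)) := by
          rw [abs_of_nonneg (by positivity)]; ring
      _ ≤ 1 / k ! * K := by
          gcongr
          exact (hmonomial k le_rfl).trans (mul_le_of_le_one_right hK0 hE)
      _ ≤ _ := by
          have : 0 ≤ (1 / ((k - 1)! : ℝ) + lam / k !) * K := by positivity
          linarith

lemma hasDerivAt_pow_mul_exp_div_factorial (lam : ℝ) {k : ℕ} (hk : 1 ≤ k) (u : ℝ) :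
    HasDerivAt (fun u ↦ u ^ k * exp (-lam * u) / k !)
      ((u ^ (k - 1) / (k - 1)! - lam * u ^ k / k !) * exp (-lam * u)) u := by
  obtain ⟨j, rfl⟩ : ∃ j, k = j + 1 := ⟨k - 1, by omega⟩
  refine (((hasDerivAt_pow (j + 1) u).mul ((hasDerivAt_id' u).const_mul (-lam)).exp).div_const
    _).congr_deriv ?_
  rw [Nat.add_sub_cancel, Nat.factorial_succ]
  push_cast
  field_simp
  ring

lemma abs_sub_le_tsum_of_dyadic_increments {f : ℝ → ℝ} (hf : ContinuousOn f (Icc 0 1))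
    {δ : ℕ → ℝ} (hδ : Summable δ)
    (hinc : ∀ m j : ℕ, j < 2 ^ m → |f ((j + 1) / 2 ^ m) - f (j / 2 ^ m)| ≤ δ m)
    {t : ℝ} (ht : t ∈ Icc 0 1) :
    |f t - f 0| ≤ ∑' m, δ m := by
  have hδ0 : ∀ m, 0 ≤ δ m := fun m ↦ (abs_nonneg _).trans (hinc m 0 (by positivity))
  have hstep : ∀ m i j : ℕ, (i = j ∨ i = j + 1) → i ≤ 2 ^ m →
      |f (i / 2 ^ m) - f (j / 2 ^ m)| ≤ δ m := by
    rintro m i j (rfl | rfl) hi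
    · simpa using hδ0 m
    · exact_mod_cast hinc m j (by omega)
  -- `a l / 2 ^ l` is the binary truncation of `t` at depth `l`
  set a : ℕ → ℕ := fun l ↦ ⌊t * 2 ^ l⌋₊
  have ha_le : ∀ l, a l ≤ 2 ^ l := fun l ↦ Nat.floor_le_of_le (by
    push_cast; nlinarith [ht.2, pow_pos (two_pos : (0 : ℝ) < 2) l])
  have ha_succ : ∀ l, a (l + 1) = 2 * a l ∨ a (l + 1) = 2 * a l + 1 := by
    intro l
    have h0 : 0 ≤ t * 2 ^ l := mul_nonneg ht.1 (by positivity)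
    have hlo : 2 * a l ≤ a (l + 1) := Nat.le_floor (by
      push_cast [pow_succ]; nlinarith [Nat.floor_le h0])
    have hhi : a (l + 1) < 2 * a l + 2 := (Nat.floor_lt (mul_nonneg ht.1 (by positivity))).2 (by
      push_cast [pow_succ]; nlinarith [Nat.lt_floor_add_one (t * 2 ^ l)])
    omega
  have hpartial : ∀ M, |f (a M / 2 ^ M) - f 0| ≤ ∑ m ∈ Finset.range (M + 1), δ m := by
    intro M
    induction M with
    | zero =>
      have h1 : a 0 ≤ 1 := by simpa using ha_le 0
      simpa using hstep 0 (a 0) 0 (by omega) (by simpa using h1)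
    | succ l ih =>
      rw [Finset.sum_range_succ]
      have hl : |f (a (l + 1) / 2 ^ (l + 1)) - f (a l / 2 ^ l)| ≤ δ (l + 1) := by
        have := hstep (l + 1) (a (l + 1)) (2 * a l) (ha_succ l) (ha_le (l + 1))
        rwa [show ((2 * a l : ℕ) : ℝ) / 2 ^ (l + 1) = a l / 2 ^ l by
          push_cast [pow_succ]; field_simp] at this
      calc _ ≤ |f (a (l + 1) / 2 ^ (l + 1)) - f (a l / 2 ^ l)| + |f (a l / 2 ^ l) - f 0| :=
            abs_sub_le _ _ _
        _ ≤ _ := by linarith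
  have hmem : ∀ l, (a l : ℝ) / 2 ^ l ∈ Icc (0 : ℝ) 1 := fun l ↦
    ⟨by positivity, (div_le_one (by positivity)).2 (by exact_mod_cast ha_le l)⟩
  have hlim : Tendsto (fun l ↦ (a l : ℝ) / 2 ^ l) atTop (𝓝[Icc 0 1] t) :=
    tendsto_nhdsWithin_iff.2 ⟨(tendsto_nat_floor_mul_div_atTop ht.1).comp
      (tendsto_pow_atTop_atTop_of_one_lt one_lt_two), Eventually.of_forall hmem⟩
  refine le_of_tendsto (((hf t ht).tendsto.comp hlim).sub_const _).abs
    (Eventually.of_forall fun M ↦ (hpartial M).trans ?_)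
  exact hδ.sum_le_tsum _ fun m _ ↦ hδ0 m

lemma exists_forall_abs_sub_le_of_eventually {f : ℝ → ℝ} (hf : Continuous f) {g : ℕ → ℝ}
    (hg : ∀ n, 1 ≤ g n) {C : ℝ}
    (h : ∀ᶠ n : ℕ in atTop, ∀ t ∈ Icc (n : ℝ) (n + 1), |f t - f n| ≤ C * g n) :
    ∃ C', 0 ≤ C' ∧ ∀ n : ℕ, ∀ t ∈ Icc (n : ℝ) (n + 1), |f t - f n| ≤ C' * g n := by
  obtain ⟨N, hN⟩ := eventually_atTop.1 h
  obtain ⟨M, hM⟩ := (isCompact_Icc (a := (0 : ℝ)) (b := N + 1)).exists_bound_of_continuousOn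
    hf.continuousOn
  have hM0 : 0 ≤ M := (norm_nonneg _).trans (hM 0 ⟨le_rfl, by positivity⟩)
  refine ⟨max C (2 * M), by positivity, fun n t ht ↦ ?_⟩
  have hg0 : 0 ≤ g n := zero_le_one.trans (hg n)
  rcases le_or_gt N n with hn | hn
  · exact (hN n hn t ht).trans (by gcongr; exact le_max_left _ _)
  · have hnN : (n : ℝ) + 1 ≤ N := by exact_mod_cast hn
    have hft := hM t ⟨(Nat.cast_nonneg n).trans ht.1, by linarith [ht.2]⟩
    have hfn := hM n ⟨Nat.cast_nonneg n, by linarith⟩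
    rw [Real.norm_eq_abs] at hft hfn
    calc |f t - f n| ≤ |f t| + |f n| := abs_sub _ _
      _ ≤ 2 * M * 1 := by linarith
      _ ≤ max C (2 * M) * g n := by gcongr; exacts [le_max_right _ _, hg n]

lemma abs_sub_le_of_forall_unit_intervals {f ψ : ℝ → ℝ} (hψ : MonotoneOn ψ (Ici 0))
    (h : ∀ n : ℕ, ∀ t ∈ Icc (n : ℝ) (n + 1), |f t - f n| ≤ ψ n) {s t : ℝ} (hs : 0 ≤ s)
    (hst : s ≤ t) :
    |f s - f t| ≤ (t - s + 3) * ψ t := by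
  have hψ0 : ∀ n : ℕ, 0 ≤ ψ n := fun n ↦ by
    simpa using h n n ⟨le_rfl, by linarith⟩
  have hfloor : ∀ x, 0 ≤ x → |f x - f ⌊x⌋₊| ≤ ψ x := fun x hx ↦
    (h _ x ⟨Nat.floor_le hx, (Nat.lt_floor_add_one x).le⟩).trans
      (hψ (mem_Ici.2 (Nat.cast_nonneg _)) hx (Nat.floor_le hx))
  have hnat : ∀ m k : ℕ, |f ((m + k : ℕ) : ℝ) - f m| ≤ k * ψ (m + k : ℕ) := by
    intro m k
    induction k with
    | zero => simp
    | succ k ih =>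
      have hmono : ψ (m + k : ℕ) ≤ ψ (m + (k + 1) : ℕ) :=
        hψ (mem_Ici.2 (Nat.cast_nonneg _)) (mem_Ici.2 (Nat.cast_nonneg _)) (by push_cast; linarith)
      have hunit := h (m + k) (m + (k + 1) : ℕ) ⟨by push_cast; linarith, by push_cast; linarith⟩
      calc _ ≤ |f ((m + (k + 1) : ℕ) : ℝ) - f (m + k : ℕ)| + |f ((m + k : ℕ) : ℝ) - f m| :=
            abs_sub_le _ _ _
        _ ≤ ψ (m + k : ℕ) + k * ψ (m + k : ℕ) := add_le_add hunit ih
        _ ≤ (k + 1 : ℕ) * ψ (m + (k + 1) : ℕ) := by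
            rw [Nat.cast_succ]
            nlinarith [hψ0 (m + k)]
  obtain ⟨k, hk⟩ : ∃ k, ⌊t⌋₊ = ⌊s⌋₊ + k := Nat.exists_eq_add_of_le (Nat.floor_mono hst)
  have hkst : (k : ℝ) ≤ t - s + 1 := by
    have := congrArg (Nat.cast (R := ℝ)) hk
    push_cast at this
    linarith [Nat.floor_le (hs.trans hst), Nat.lt_floor_add_one s]
  have ht0 : 0 ≤ t := hs.trans hst
  have hψt : ψ (⌊s⌋₊ + k : ℕ) ≤ ψ t :=
    hk ▸ hψ (mem_Ici.2 (Nat.cast_nonneg _)) ht0 (Nat.floor_le ht0)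
  have hψt0 : 0 ≤ ψ t := (hψ0 _).trans hψt
  calc |f s - f t|
      ≤ |f s - f ⌊s⌋₊| + |f ((⌊s⌋₊ + k : ℕ) : ℝ) - f ⌊s⌋₊| + |f t - f ⌊t⌋₊| := by
        rw [← hk, abs_sub_comm (f t)]
        linarith [abs_sub_le (f s) (f ⌊s⌋₊) (f t), abs_sub_le (f ⌊s⌋₊) (f ⌊t⌋₊) (f t),
          abs_sub_comm (f ⌊s⌋₊) (f ⌊t⌋₊)]
    _ ≤ ψ s + k * ψ t + ψ t := by
        gcongr
        · exact hfloor s hs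
        · exact (hnat _ k).trans (by gcongr)
        · exact hfloor t ht0
    _ ≤ (t - s + 3) * ψ t := by
        nlinarith [hψ hs ht0 hst]

lemma exp_neg_two_le : exp (-2) ≤ 1 / 4 := by
  rw [exp_neg, one_div]
  refine inv_anti₀ (by norm_num) ?_
  have := add_one_le_exp (1 : ℝ)
  calc (4 : ℝ) = 2 * 2 := by norm_num
    _ ≤ exp 1 * exp 1 := by gcongr <;> linarith
    _ = exp 2 := by rw [← exp_add]; norm_num

lemma summable_succ_div_sqrt_two_pow : Summable fun m : ℕ ↦ ((m : ℝ) + 1) / √2 ^ m := by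
  have hr : ‖(√2)⁻¹‖ < 1 := by
    rw [norm_inv, Real.norm_of_nonneg (sqrt_nonneg 2)]
    exact inv_lt_one_of_one_lt₀ (by rw [lt_sqrt zero_le_one]; norm_num)
  refine ((summable_pow_mul_geometric_of_norm_lt_one 1 hr).add
    (summable_geometric_of_norm_lt_one hr)).congr fun m ↦ ?_
  rw [inv_pow, pow_one]
  ring

section BrownianMotion

variable {Ω : Type*} [MeasureSpace Ω] [IsProbabilityMeasure (volume : Measure Ω)]
  {B : ℝ → Ω → ℝ}

lemma IsStdBM1.measureReal_abs_sub_ge_le (hB : IsStdBM1 B) {p q a : ℝ} (hp : 0 ≤ p)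
    (hpq : p ≤ q) (ha : 0 ≤ a) :
    volume.real {ω | a ≤ |B q ω - B p ω|} ≤ 2 * exp (-a ^ 2 / (2 * (q - p))) := by
  have := measureReal_abs_ge_le_of_map_eq_gaussianReal
    ((hB.measurable q).sub (hB.measurable p)).aemeasurable (hB.gauss p q hp hpq) ha
  rwa [Real.coe_toNNReal _ (sub_nonneg.2 hpq)] at this

lemma IsStdBM1.measure_dyadic_increment_ge_le (hB : IsStdBM1 B) (n m j : ℕ) :
    volume {ω | 2 * (1 + √(log (n + 2))) * ((m + 1) / √2 ^ m)
        ≤ |B (n + (j + 1) / 2 ^ m) ω - B (n + j / 2 ^ m) ω|}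
      ≤ ENNReal.ofReal (2 * (1 / 4) ^ m / (n + 2) ^ 2) := by
  set L := log (n + 2)
  have hL : 0 ≤ L := log_nonneg (by linarith [(Nat.cast_nonneg n : (0 : ℝ) ≤ n)])
  have hsq : (√2 ^ m) ^ 2 = 2 ^ m := by rw [← pow_mul, mul_comm, pow_mul, sq_sqrt zero_le_two]
  rw [← ofReal_measureReal]
  refine ENNReal.ofReal_le_ofReal ((hB.measureReal_abs_sub_ge_le (by positivity)
    (by gcongr; linarith) (by positivity)).trans ?_)
  have hexponent : 2 * m + 2 * L ≤ (2 * (1 + √L) * ((m + 1) / √2 ^ m)) ^ 2 /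
      (2 * ((n + (j + 1) / 2 ^ m) - (n + j / 2 ^ m))) := by
    rw [show (2 * (1 + √L) * ((m + 1) / √2 ^ m)) ^ 2
        / (2 * ((n + (j + 1) / 2 ^ m) - (n + j / 2 ^ m))) = 2 * (1 + √L) ^ 2 * (m + 1) ^ 2 by
      field_simp; rw [hsq]; ring]
    have hm : (0 : ℝ) ≤ m := Nat.cast_nonneg m
    calc 2 * m + 2 * L ≤ 2 * (1 + L) * (m + 1) := by nlinarith
      _ ≤ 2 * (1 + √L) ^ 2 * (m + 1) ^ 2 := by
          gcongr
          · nlinarith [sq_sqrt hL, sqrt_nonneg L]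
          · nlinarith
  calc 2 * exp (-_ / _) ≤ 2 * exp (-(2 * m + 2 * L)) := by gcongr; rw [neg_div]; linarith
    _ = 2 * exp (-2) ^ m / (n + 2) ^ 2 := by
        rw [show -(2 * m + 2 * L) = m * (-2) - (L + L) by ring, exp_sub, exp_nat_mul, exp_add,
          exp_log (by positivity)]
        ring
    _ ≤ 2 * (1 / 4) ^ m / (n + 2) ^ 2 := by gcongr; exact exp_neg_two_le

lemma IsStdBM1.ae_eventually_dyadic_increments_le (hB : IsStdBM1 B) :
    ∀ᵐ ω, ∀ᶠ n : ℕ in atTop, ∀ m j : ℕ, j < 2 ^ m →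
      |B (n + (j + 1) / 2 ^ m) ω - B (n + j / 2 ^ m) ω|
        ≤ 2 * (1 + √(log (n + 2))) * ((m + 1) / √2 ^ m) := by
  set E : ℕ → Set Ω := fun n ↦ ⋃ m : ℕ, ⋃ j ∈ Finset.range (2 ^ m),
    {ω | 2 * (1 + √(log (n + 2))) * ((m + 1) / √2 ^ m)
      ≤ |B (n + (j + 1) / 2 ^ m) ω - B (n + j / 2 ^ m) ω|}
  have hE : ∀ n : ℕ, volume (E n) ≤ ENNReal.ofReal (4 / (n + 2) ^ 2) := fun n ↦ calc
    volume (E n) ≤ ∑' m : ℕ, ∑ j ∈ Finset.range (2 ^ m), volume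
        {ω | 2 * (1 + √(log (n + 2))) * ((m + 1) / √2 ^ m)
          ≤ |B (n + (j + 1) / 2 ^ m) ω - B (n + j / 2 ^ m) ω|} :=
      (measure_iUnion_le _).trans (ENNReal.tsum_le_tsum fun m ↦ measure_biUnion_finset_le _ _)
    _ ≤ ∑' m : ℕ, ∑ _j ∈ Finset.range (2 ^ m), ENNReal.ofReal (2 * (1 / 4) ^ m / (n + 2) ^ 2) := by
      gcongr with m j
      exact hB.measure_dyadic_increment_ge_le n m j
    _ = ∑' m : ℕ, ENNReal.ofReal (2 / (n + 2) ^ 2 * (1 / 2) ^ m) := by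
      congr 1 with m
      rw [Finset.sum_const, Finset.card_range, nsmul_eq_mul, ← ENNReal.ofReal_natCast,
        ← ENNReal.ofReal_mul (by positivity)]
      congr 1
      rw [show (1 / 4 : ℝ) ^ m = (1 / 2) ^ m * (1 / 2) ^ m by rw [← mul_pow]; norm_num]
      have : (2 : ℝ) ^ m * (1 / 2) ^ m = 1 := by rw [← mul_pow]; norm_num
      push_cast
      linear_combination (2 * (1 / 2) ^ m / (n + 2) ^ 2) * this
    _ = ENNReal.ofReal (4 / (n + 2) ^ 2) := by
      rw [← ENNReal.ofReal_tsum_of_nonneg (fun m ↦ by positivity)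
        (summable_geometric_two.mul_left _), tsum_mul_left, tsum_geometric_two]
      ring_nf
  have hsum : Summable fun n : ℕ ↦ 4 / ((n : ℝ) + 2) ^ 2 := by
    have := ((summable_nat_add_iff 2).2
      (Real.summable_one_div_nat_pow.2 one_lt_two)).mul_left 4
    exact this.congr fun n ↦ by push_cast; ring
  have hfin : ∑' n, volume (E n) ≠ ⊤ :=
    ne_top_of_le_ne_top (ENNReal.ofReal_tsum_of_nonneg (fun n ↦ by positivity) hsum ▸
      ENNReal.ofReal_ne_top) (ENNReal.tsum_le_tsum hE)
  filter_upwards [ae_eventually_notMem hfin] with ω hω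
  filter_upwards [hω] with n hn m j hj
  by_contra hcon
  exact hn (mem_iUnion.2 ⟨m, mem_iUnion₂.2 ⟨j, Finset.mem_range.2 hj, (not_le.1 hcon).le⟩⟩)

lemma IsStdBM1.ae_exists_abs_sub_le (hB : IsStdBM1 B) :
    ∀ᵐ ω, ∃ C, 0 ≤ C ∧ ∀ n : ℕ, ∀ t ∈ Icc (n : ℝ) (n + 1),
      |B t ω - B n ω| ≤ C * (1 + √(log (n + 2))) := by
  filter_upwards [hB.ae_eventually_dyadic_increments_le] with ω hω
  refine exists_forall_abs_sub_le_of_eventually (hB.cont ω)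
    (fun n ↦ le_add_of_nonneg_right (sqrt_nonneg _))
    (C := 2 * ∑' m : ℕ, ((m : ℝ) + 1) / √2 ^ m) ?_
  filter_upwards [hω] with n hn t ht
  have hchain := abs_sub_le_tsum_of_dyadic_increments (f := fun x ↦ B (n + x) ω)
    ((hB.cont ω).comp (continuous_const.add continuous_id)).continuousOn
    (summable_succ_div_sqrt_two_pow.mul_left (2 * (1 + √(log (n + 2))))) hn
    (t := t - n) ⟨by linarith [ht.1], by linarith [ht.2]⟩
  rw [tsum_mul_left, add_sub_cancel, add_zero] at hchain
  linarith

end BrownianMotion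

lemma one_add_sqrt_log_add_two_le {t : ℝ} (ht : 3 ≤ t) :
    1 + √(log (t + 2)) ≤ 3 * √(log t) := by
  have hlog1 : 1 ≤ log t := by
    rw [le_log_iff_exp_le (by linarith)]
    linarith [exp_one_lt_d9]
  have hlog2 : log (t + 2) ≤ 2 ^ 2 * log t := by
    have := log_le_log (by linarith) (show t + 2 ≤ t ^ 2 by nlinarith)
    rw [log_pow] at this
    push_cast at this
    linarith
  have h1 : 1 ≤ √(log t) := by rw [le_sqrt zero_le_one (by linarith)]; simpa using hlog1
  have h2 : √(log (t + 2)) ≤ 2 * √(log t) := by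
    calc √(log (t + 2)) ≤ √(2 ^ 2 * log t) := sqrt_le_sqrt hlog2
      _ = 2 * √(log t) := by rw [sqrt_mul (by norm_num), sqrt_sq (by norm_num)]
  linarith

/-- For `g_k(u) = u^k e^{-λu}/k!` with `k ≥ 1`, the pathwise Wiener integral
`∫₀ᵗ g_k(t-s) dB_s = ∫₀ᵗ [(t-s)^(k-1)/(k-1)! - λ(t-s)^k/k!] e^{-λ(t-s)} B_s ds`
is `O(√(log t))` almost surely. -/
theorem stmt3 {Ω : Type*} [MeasureSpace Ω] [IsProbabilityMeasure (volume : Measure Ω)]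
    (B : ℝ → Ω → ℝ) (hB : IsStdBM1 B) (lam : ℝ) (hlam : 0 < lam) (k : ℕ) (hk : 1 ≤ k) :
    ∀ᵐ ω ∂(volume : Measure Ω),
      IsBoundedUnder (· ≤ ·) atTop (fun t : ℝ =>
        |∫ s in (0:ℝ)..t,
            ((t - s) ^ (k - 1) / (Nat.factorial (k - 1) : ℝ)
              - lam * (t - s) ^ k / (Nat.factorial k : ℝ))
              * Real.exp (-lam * (t - s)) * B s ω| /
          Real.sqrt (Real.log t)) := by
  obtain ⟨A, hA⟩ := exists_kernel_bound hlam k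
  filter_upwards [hB.ae_exists_abs_sub_le] with ω ⟨C, hC0, hC⟩
  have hψ : MonotoneOn (fun x ↦ C * (1 + √(log (x + 2)))) (Ici 0) := fun x hx y _ hxy ↦ by
    have : (0 : ℝ) < x + 2 := by linarith [mem_Ici.1 hx]
    dsimp only
    gcongr
  refine isBoundedUnder_of_eventually_le (a := (A / (lam / 2) + A) * (C * 3)) ?_
  filter_upwards [eventually_ge_atTop 3] with t ht
  rw [div_le_iff₀ (sqrt_pos.2 (log_pos (by linarith)))]
  calc _ ≤ (A / (lam / 2) + A) * (C * (1 + √(log (t + 2)))) :=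
        abs_integral_comp_sub_mul_le (half_pos hlam) (by linarith) (by positivity)
          (hasDerivAt_pow_mul_exp_div_factorial lam hk) (by fun_prop) (by simp; omega)
          (fun u hu ↦ (hA u hu).1) (hA t (by linarith)).2 (hB.cont ω) (hB.init ω)
          fun s hs ↦ abs_sub_le_of_forall_unit_intervals hψ hC hs.1 hs.2
    _ ≤ (A / (lam / 2) + A) * (C * 3) * √(log t) := by
        have hA0 : 0 ≤ A := (mul_nonneg (abs_nonneg _) (by norm_num)).trans (hA 0 le_rfl).2
        rw [mul_assoc _ (C * 3), mul_assoc C]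
        gcongr
        exact one_add_sqrt_log_add_two_le ht
end

section
/- Let A be a d×d real matrix all of whose eigenvalues have positive real part, and let D be a d×d real matrix. Then the function s ↦ e^{−sA}·(D·Dᵀ)·e^{−sAᵀ} is Bochner integrable on [0,∞), so that the matrix Σ := ∫₀^∞ e^{−sA}·(D·Dᵀ)·e^{−sAᵀ} ds is well defined (and is symmetric positive semidefinite). -/
/-!
If every eigenvalue of `A` has positive real part, every point of the spectrum of `e^{-A}` has
modulus `< 1`. To see this, compute in the closed commutative subalgebra generated by `-A`: there
characters commute with `exp`, and the spectrum of `-A` is the same as in the full matrix algebra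
because its complement (the complement of a finite set in `ℂ`) is connected. Gelfand's formula
then makes `‖e^{-nA}‖` decay geometrically, and `e^{-sA} = (e^{-A})^⌊s⌋ e^{-(s-⌊s⌋)A}` turns this
into exponential decay of `e^{-sA}`, hence of the integrand. Each integrand is
`(e^{-sA} D)(e^{-sA} D)ᵀ`, and positive semidefiniteness passes to the integral through the
continuous linear maps `M ↦ Mᵀ` and `M ↦ xᵀ M x`.
-/

open MeasureTheory Filter

attribute [local instance] Matrix.normedAddCommGroup Matrix.normedSpace

instance matrixContinuousENorm {n : Type*} [Fintype n] :
    ContinuousENorm (Matrix n n ℝ) :=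
  SeminormedAddGroup.toContinuousENorm

open Asymptotics
open NormedSpace (exp)
open scoped NNReal ENNReal Topology Matrix

section ComplexBanachAlgebra

variable {A : Type*} [NormedRing A] [NormedAlgebra ℂ A] [CompleteSpace A]

theorem spectrum_exp_subset_image_exp {a : A} (ha : IsPreconnected (spectrum ℂ a)ᶜ) :
    spectrum ℂ (exp a) ⊆ Complex.exp '' spectrum ℂ a := by
  let S := Algebra.elemental ℂ a
  let : NormedCommRing S := { SubringClass.toNormedRing S with mul_comm := mul_comm }
  let : NormedAlgebra ℚ S := .restrictScalars ℚ ℂ S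
  let : NormedAlgebra ℚ A := .restrictScalars ℚ ℂ A
  let a' : S := ⟨a, Algebra.elemental.self_mem ℂ a⟩
  have hexp : ((exp a' : S) : A) = exp a := NormedSpace.map_exp S.val continuous_subtype_val a'
  intro z hz
  rw [← hexp] at hz
  obtain ⟨φ, rfl⟩ :=
    WeakDual.CharacterSpace.mem_spectrum_iff_exists.mp (spectrum.subset_subalgebra _ hz)
  refine ⟨φ a', ?_, ?_⟩
  · rw [← Subalgebra.spectrum_eq_of_isPreconnected_compl S a' ha]
    exact AlgHom.apply_mem_spectrum φ a'
  · rw [NormedSpace.map_exp φ (map_continuous φ) a', Complex.exp_eq_exp_ℂ]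

theorem spectralRadius_exp_lt_one {b : A} (hb : ∀ z ∈ spectrum ℂ b, z.re < 0)
    (hσ : (spectrum ℂ b).Countable) : spectralRadius ℂ (exp b) < 1 := by
  rcases (spectrum ℂ (exp b)).eq_empty_or_nonempty with hempty | hne
  · simp [spectralRadius, hempty]
  have hsub := spectrum_exp_subset_image_exp
    (hσ.isConnected_compl_of_one_lt_rank (by simp)).isPreconnected
  have hlt : ∀ z ∈ spectrum ℂ (exp b), ‖z‖₊ < 1 := by
    rintro _ hz
    obtain ⟨w, hw, rfl⟩ := hsub hz
    rw [← NNReal.coe_lt_coe, coe_nnnorm, Complex.norm_exp, NNReal.coe_one, Real.exp_lt_one_iff]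
    exact hb w hw
  simpa using spectrum.spectralRadius_lt_of_forall_lt_of_nonempty hne hlt

theorem isBigO_pow_of_spectralRadius_lt {x : A} {r : ℝ≥0} (hr : spectralRadius ℂ x < r) :
    (fun n : ℕ => x ^ n) =O[atTop] fun n => (r : ℝ) ^ n := by
  have hev := (spectrum.pow_nnnorm_pow_one_div_tendsto_nhds_spectralRadius x).eventually
    (gt_mem_nhds hr)
  refine IsBigO.of_bound 1 ?_
  filter_upwards [hev, eventually_ne_atTop 0] with n hn hn0
  rw [one_div, ENNReal.rpow_inv_lt_iff (by positivity), ENNReal.rpow_natCast] at hn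
  norm_cast at hn
  rw [one_mul, Real.norm_of_nonneg (by positivity), ← coe_nnnorm]
  exact_mod_cast hn.le

theorem exp_real_smul_eq_pow_floor_mul (b : A) (s : ℝ) :
    exp ((s : ℂ) • b) = exp b ^ ⌊s⌋₊ * exp (((s - ⌊s⌋₊ : ℝ) : ℂ) • b) := by
  let : NormedAlgebra ℚ A := .restrictScalars ℚ ℂ A
  have hcomm : Commute ((⌊s⌋₊ : ℂ) • b) (((s - ⌊s⌋₊ : ℝ) : ℂ) • b) :=
    ((Commute.refl b).smul_left _).smul_right _
  rw [← NormedSpace.exp_nsmul, ← Nat.cast_smul_eq_nsmul ℂ, ← NormedSpace.exp_add_of_commute hcomm,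
    ← add_smul]
  push_cast
  ring_nf

theorem exists_isBigO_exp_real_smul {b : A} (hb : spectralRadius ℂ (exp b) < 1) :
    ∃ ε > 0, (fun s : ℝ => exp ((s : ℂ) • b)) =O[atTop] fun s => Real.exp (-ε * s) := by
  obtain ⟨r, hρr, hr1⟩ := ENNReal.lt_iff_exists_nnreal_btwn.mp hb
  have hr0 : 0 < (r : ℝ) := NNReal.coe_pos.2 (ENNReal.coe_pos.1 (zero_le.trans_lt hρr))
  have hlog : Real.log r < 0 := Real.log_neg hr0 (by exact_mod_cast hr1)
  refine ⟨-Real.log r, neg_pos.mpr hlog, ?_⟩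
  let : NormedAlgebra ℚ A := .restrictScalars ℚ ℂ A
  obtain ⟨K, hK⟩ := (isCompact_Icc (a := (0 : ℝ)) (b := 1)).exists_bound_of_continuousOn
    (f := fun t : ℝ => exp ((t : ℂ) • b))
    (NormedSpace.exp_continuous.comp (by fun_prop)).continuousOn
  have hfrac : (fun s : ℝ => exp (((s - ⌊s⌋₊ : ℝ) : ℂ) • b)) =O[atTop] fun _ => (1 : ℝ) := by
    refine IsBigO.of_bound K ?_
    filter_upwards [eventually_ge_atTop 0] with s hs
    rw [norm_one, mul_one]
    exact hK _ ⟨sub_nonneg.2 (Nat.floor_le hs), by linarith [Nat.lt_floor_add_one s]⟩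
  have hfloor : (fun s : ℝ => (r : ℝ) ^ ⌊s⌋₊) =O[atTop] fun s => Real.exp (- -Real.log r * s) := by
    refine IsBigO.of_bound (r : ℝ)⁻¹ ?_
    filter_upwards [eventually_ge_atTop 0] with s hs
    have hinv : (r : ℝ)⁻¹ = Real.exp (-Real.log r) := by rw [Real.exp_neg, Real.exp_log hr0]
    rw [Real.norm_of_nonneg (by positivity), Real.norm_of_nonneg (by positivity), hinv,
      ← Real.exp_add, ← Real.rpow_natCast, Real.rpow_def_of_pos hr0, Real.exp_le_exp]
    nlinarith [Nat.lt_floor_add_one s]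
  refine (EventuallyEq.trans_isBigO ?_ (((isBigO_pow_of_spectralRadius_lt hρr).comp_tendsto
    tendsto_nat_floor_atTop).mul hfrac)).trans ?_
  · filter_upwards [eventually_ge_atTop 0] with s hs
    exact exp_real_smul_eq_pow_floor_mul b s
  · simpa using hfloor

end ComplexBanachAlgebra

section LinftyOpNorm

-- The sup norm fixed above is not submultiplicative; the `L∞` operator norm makes matrices a
-- Banach algebra.
attribute [-instance] Matrix.normedAddCommGroup Matrix.normedSpace
attribute [local instance] Matrix.linftyOpSeminormedAddCommGroup Matrix.linftyOpNormedRing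
  Matrix.linftyOpNormedAlgebra

theorem Matrix.norm_apply_le_linfty_opNorm {m n α : Type*} [Fintype m] [Fintype n]
    [SeminormedAddCommGroup α] (M : Matrix m n α) (i : m) (j : n) : ‖M i j‖ ≤ ‖M‖ := by
  rw [Matrix.linfty_opNorm_def]
  have := (Finset.single_le_sum (f := fun k => ‖M i k‖₊) (fun _ _ => zero_le)
    (Finset.mem_univ j)).trans (Finset.le_sup (f := fun i => ∑ k, ‖M i k‖₊) (Finset.mem_univ i))
  exact_mod_cast this

variable {n : Type*} [Fintype n] [DecidableEq n]

theorem Matrix.continuous_exp : Continuous (exp : Matrix n n ℝ → Matrix n n ℝ) :=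
  NormedSpace.exp_continuous

theorem Matrix.map_ofReal_exp (M : Matrix n n ℝ) :
    (exp M).map Complex.ofReal = exp (M.map Complex.ofReal) :=
  NormedSpace.map_exp Complex.ofRealHom.mapMatrix
    (continuous_id.matrix_map Complex.continuous_ofReal) M

theorem Matrix.exists_isBigO_exp_neg_smul_apply (A : Matrix n n ℝ)
    (hA : ∀ μ ∈ spectrum ℂ (A.map Complex.ofReal), 0 < μ.re) :
    ∃ ε > 0, ∀ i j, (fun s : ℝ => exp ((-s) • A) i j) =O[atTop] fun s => Real.exp (-ε * s) := by
  set B := -A.map Complex.ofReal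
  have hB : ∀ z ∈ spectrum ℂ B, z.re < 0 := by
    intro z hz
    rw [← spectrum.neg_eq] at hz
    simpa using hA (-z) hz
  obtain ⟨ε, hε, hO⟩ :=
    exists_isBigO_exp_real_smul (spectralRadius_exp_lt_one hB B.finite_spectrum.countable)
  refine ⟨ε, hε, fun i j => (IsBigO.of_bound 1 (Eventually.of_forall fun s => ?_)).trans hO⟩
  have hmap : (exp ((-s) • A)).map Complex.ofReal = exp ((s : ℂ) • B) := by
    rw [Matrix.map_ofReal_exp]
    congr 1
    ext
    simp [B]
  calc ‖exp ((-s) • A) i j‖ = ‖(exp ((-s) • A)).map Complex.ofReal i j‖ :=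
        (Complex.norm_real _).symm
    _ ≤ ‖(exp ((-s) • A)).map Complex.ofReal‖ := Matrix.norm_apply_le_linfty_opNorm _ i j
    _ = 1 * ‖exp ((s : ℂ) • B)‖ := by rw [hmap, one_mul]

end LinftyOpNorm

instance Matrix.pseudoMetrizableSpace {m n R : Type*} [Finite m] [Finite n]
    [TopologicalSpace R] [TopologicalSpace.PseudoMetrizableSpace R] :
    TopologicalSpace.PseudoMetrizableSpace (Matrix m n R) :=
  inferInstanceAs (TopologicalSpace.PseudoMetrizableSpace (m → n → R))

theorem Matrix.exists_isBigO_exp_neg_smul {n : Type*} [Fintype n] [DecidableEq n]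
    (A : Matrix n n ℝ) (hA : ∀ μ ∈ spectrum ℂ (A.map Complex.ofReal), 0 < μ.re) :
    ∃ ε > 0, (fun s : ℝ => exp ((-s) • A)) =O[atTop] fun s => Real.exp (-ε * s) := by
  obtain ⟨ε, hε, h⟩ := A.exists_isBigO_exp_neg_smul_apply hA
  exact ⟨ε, hε, isBigO_pi.2 fun i => isBigO_pi.2 (h i)⟩

theorem Matrix.norm_mul_le_card_mul {l m n α : Type*} [Fintype l] [Fintype m] [Fintype n]
    [NormedRing α] (A : Matrix l m α) (B : Matrix m n α) :
    ‖A * B‖ ≤ Fintype.card m * ‖A‖ * ‖B‖ := by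
  refine (Matrix.norm_le_iff (by positivity)).2 fun i j => ?_
  calc ‖(A * B) i j‖ ≤ ∑ k, ‖A i k‖ * ‖B k j‖ :=
        (norm_sum_le _ _).trans (Finset.sum_le_sum fun k _ => norm_mul_le _ _)
    _ ≤ ∑ _k : m, ‖A‖ * ‖B‖ := Finset.sum_le_sum fun k _ =>
        mul_le_mul (Matrix.norm_entry_le_entrywise_sup_norm A)
          (Matrix.norm_entry_le_entrywise_sup_norm B) (norm_nonneg _) (norm_nonneg _)
    _ = Fintype.card m * ‖A‖ * ‖B‖ := by simp [mul_assoc]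

theorem Matrix.isBigO_mul_mul_transpose {α n : Type*} [Fintype n] {l : Filter α}
    {E : α → Matrix n n ℝ} {g : α → ℝ} (hE : E =O[l] g) (M : Matrix n n ℝ) :
    (fun x => E x * M * (E x)ᵀ) =O[l] fun x => g x * g x := by
  refine (IsBigO.of_bound (Fintype.card n ^ 2 * ‖M‖) (Eventually.of_forall fun x => ?_)).trans
    (hE.norm_left.mul hE.norm_left)
  calc ‖E x * M * (E x)ᵀ‖ ≤ Fintype.card n * (Fintype.card n * ‖E x‖ * ‖M‖) * ‖E x‖ := by
        grw [Matrix.norm_mul_le_card_mul, Matrix.norm_mul_le_card_mul, Matrix.norm_transpose]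
    _ = Fintype.card n ^ 2 * ‖M‖ * ‖‖E x‖ * ‖E x‖‖ := by
        rw [Real.norm_of_nonneg (by positivity)]
        ring

theorem Matrix.posSemidef_integral {α n : Type*} [MeasurableSpace α] {μ : Measure α} [Fintype n]
    {f : α → Matrix n n ℝ} (hf : Integrable f μ) (hpos : ∀ᵐ x ∂μ, (f x).PosSemidef) :
    (∫ x, f x ∂μ).PosSemidef := by
  classical
  rw [Matrix.posSemidef_iff_dotProduct_mulVec]
  refine ⟨?_, fun v => ?_⟩
  · let T : Matrix n n ℝ ≃L[ℝ] Matrix n n ℝ :=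
      (Matrix.transposeLinearEquiv n n ℝ ℝ).toContinuousLinearEquiv
    rw [Matrix.IsHermitian, Matrix.conjTranspose_eq_transpose_of_trivial]
    calc (∫ x, f x ∂μ)ᵀ = T (∫ x, f x ∂μ) := rfl
      _ = ∫ x, T (f x) ∂μ := (T.integral_comp_comm _).symm
      _ = ∫ x, f x ∂μ := integral_congr_ae <| hpos.mono fun x hx => by
        simpa [T, Matrix.IsHermitian] using hx.1
  · let L : Matrix n n ℝ →L[ℝ] ℝ := LinearMap.toContinuousLinearMap
      (LinearMap.applyₗ v ∘ₗ LinearMap.applyₗ (star v) ∘ₗ (Matrix.toLinearMap₂' ℝ).toLinearMap)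
    have hL : ∀ M, L M = star v ⬝ᵥ (M *ᵥ v) := fun M => by
      simp [L, Matrix.toLinearMap₂'_apply']
    calc 0 ≤ ∫ x, L (f x) ∂μ := integral_nonneg_of_ae <| hpos.mono fun x hx => by
          simpa only [Pi.zero_apply, hL] using hx.dotProduct_mulVec_nonneg v
      _ = L (∫ x, f x ∂μ) := L.integral_comp_comm hf
      _ = star v ⬝ᵥ ((∫ x, f x ∂μ) *ᵥ v) := hL _

/-- If all eigenvalues of `A` have positive real part, then
`s ↦ e^{-sA} (D Dᵀ) e^{-sAᵀ}` is Bochner integrable on `[0,∞)`, and the matrix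
`Σ = ∫₀^∞ e^{-sA} (D Dᵀ) e^{-sAᵀ} ds` is symmetric positive semidefinite. -/
theorem stmt8 {d : ℕ} (A D : Matrix (Fin d) (Fin d) ℝ)
    (hA : ∀ μ ∈ spectrum ℂ (A.map Complex.ofReal), 0 < μ.re) :
    IntegrableOn
      (fun s : ℝ => NormedSpace.exp ((-s) • A) * (D * D.transpose) *
        NormedSpace.exp ((-s) • A.transpose))
      (Set.Ioi 0) volume ∧
    (∫ s in Set.Ioi (0:ℝ), NormedSpace.exp ((-s) • A) * (D * D.transpose) *
        NormedSpace.exp ((-s) • A.transpose)).PosSemidef := by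
  have htr : ∀ s : ℝ, exp ((-s) • Aᵀ) = (exp ((-s) • A))ᵀ := fun s => by
    rw [← Matrix.transpose_smul, Matrix.exp_transpose]
  simp only [htr]
  obtain ⟨ε, hε, hO⟩ := A.exists_isBigO_exp_neg_smul hA
  have hE : Continuous fun s : ℝ => exp ((-s) • A) := Matrix.continuous_exp.comp (by fun_prop)
  have hcont : Continuous fun s : ℝ => exp ((-s) • A) * (D * Dᵀ) * (exp ((-s) • A))ᵀ := by
    fun_prop
  have hdecay : (fun s : ℝ => exp ((-s) • A) * (D * Dᵀ) * (exp ((-s) • A))ᵀ) =O[atTop]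
      fun s => Real.exp (-(ε + ε) * s) := by
    convert Matrix.isBigO_mul_mul_transpose hO (D * Dᵀ) using 2 with s
    rw [← Real.exp_add]
    ring_nf
  have hint := (integrable_norm_iff hcont.aestronglyMeasurable).1
    (integrable_of_isBigO_exp_neg (a := 0) (by positivity) hcont.norm.continuousOn hdecay.norm_left)
  refine ⟨hint, Matrix.posSemidef_integral hint (ae_of_all _ fun s => ?_)⟩
  simpa only [Matrix.conjTranspose_eq_transpose_of_trivial] using
    (Matrix.posSemidef_self_mul_conjTranspose D).mul_mul_conjTranspose_same (exp ((-s) • A))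
end

section
/- Let 0 < ε₀ < λ₀, let f : [0,∞) → [0,∞) be nondecreasing, and let u : [0,∞) → [0,∞) be a continuous function satisfying u(t) ≤ f(t) + ε₀ ∫₀ᵗ e^{−λ₀(t−s)} u(s) ds for all t ≥ 0. Then u(t) ≤ (λ₀/(λ₀ − ε₀))·f(t) for all t ≥ 0. -/
/-!
Let `M` be the maximum of `u` on `[0, T]`, attained at `t₀`. Bounding `u` by `M` inside the
integral and using `∫₀^{t₀} e^{-λ₀(t₀-s)} ds ≤ 1/λ₀` gives `M ≤ f(t₀) + (ε₀/λ₀) M ≤ f(T) + (ε₀/λ₀) M`,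
and since `ε₀ < λ₀` this can be solved for `M ≥ u(T)`.
-/

open MeasureTheory Real Set

theorem integral_exp_neg_mul_sub_le_inv {lam : ℝ} (hlam : 0 < lam) (t : ℝ) :
    ∫ s in (0:ℝ)..t, exp (-lam * (t - s)) ≤ lam⁻¹ := by
  have hderiv : ∀ s ∈ uIcc 0 t,
      HasDerivAt (fun s => exp (-lam * (t - s)) / lam) (exp (-lam * (t - s))) s := by
    intro s _
    have hlin : HasDerivAt (fun s : ℝ => -lam * (t - s)) lam s := by
      simpa using ((hasDerivAt_id s).const_sub t).const_mul (-lam)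
    simpa [mul_div_assoc, hlam.ne'] using hlin.exp.div_const lam
  rw [intervalIntegral.integral_eq_sub_of_hasDerivAt hderiv
    ((by fun_prop : Continuous fun s => exp (-lam * (t - s))).intervalIntegrable 0 t)]
  simp only [sub_self, mul_zero, exp_zero, one_div, sub_le_self_iff]
  positivity

theorem integral_exp_neg_mul_sub_mul_le {lam : ℝ} (hlam : 0 < lam) {t M : ℝ} (ht : 0 ≤ t)
    (hM : 0 ≤ M) {u : ℝ → ℝ} (hu : ContinuousOn u (Icc 0 t)) (huM : ∀ s ∈ Icc 0 t, u s ≤ M) :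
    ∫ s in (0:ℝ)..t, exp (-lam * (t - s)) * u s ≤ M / lam := by
  have hker : Continuous fun s => exp (-lam * (t - s)) := by fun_prop
  calc ∫ s in (0:ℝ)..t, exp (-lam * (t - s)) * u s
      ≤ ∫ s in (0:ℝ)..t, exp (-lam * (t - s)) * M := by
        refine intervalIntegral.integral_mono_on ht ?_
          ((hker.mul continuous_const).intervalIntegrable 0 t)
          fun s hs => mul_le_mul_of_nonneg_left (huM s hs) (exp_pos _).le
        exact (hker.continuousOn.mul (by rwa [uIcc_of_le ht])).intervalIntegrable
    _ = (∫ s in (0:ℝ)..t, exp (-lam * (t - s))) * M := intervalIntegral.integral_mul_const _ _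
    _ ≤ lam⁻¹ * M := mul_le_mul_of_nonneg_right (integral_exp_neg_mul_sub_le_inv hlam t) hM
    _ = M / lam := inv_mul_eq_div _ _

theorem le_div_sub_mul_of_le_add_mul_div {eps lam M F : ℝ} (hlam : 0 < lam) (hlt : eps < lam)
    (h : M ≤ F + eps * (M / lam)) : M ≤ lam / (lam - eps) * F := by
  rw [div_mul_eq_mul_div, le_div_iff₀ (sub_pos.2 hlt)]
  have := mul_le_mul_of_nonneg_right h hlam.le
  rw [add_mul, mul_assoc, div_mul_cancel₀ _ hlam.ne'] at this
  linarith

theorem stmt11_general (eps0 lam0 : ℝ) (heps0 : 0 < eps0) (hlt : eps0 < lam0)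
    (f : ℝ → ℝ) (hfmono : MonotoneOn f (Set.Ici 0))
    (u : ℝ → ℝ) (hu0 : ∀ t : ℝ, 0 ≤ t → 0 ≤ u t) (hucont : ContinuousOn u (Set.Ici 0))
    (hineq : ∀ t : ℝ, 0 ≤ t →
      u t ≤ f t + eps0 * ∫ s in (0:ℝ)..t, Real.exp (-lam0 * (t - s)) * u s) :
    ∀ t : ℝ, 0 ≤ t → u t ≤ lam0 / (lam0 - eps0) * f t := by
  intro T hT
  have hlam0 : 0 < lam0 := heps0.trans hlt
  obtain ⟨t₀, ⟨ht₀, ht₀T⟩, hmax⟩ := isCompact_Icc.exists_isMaxOn (nonempty_Icc.2 hT)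
    (hucont.mono fun x hx => hx.1)
  have hintegral : ∫ s in (0:ℝ)..t₀, exp (-lam0 * (t₀ - s)) * u s ≤ u t₀ / lam0 :=
    integral_exp_neg_mul_sub_mul_le hlam0 ht₀ (hu0 t₀ ht₀)
      (hucont.mono fun x hx => hx.1) fun s hs => hmax ⟨hs.1, hs.2.trans ht₀T⟩
  have hmax_le : u t₀ ≤ f T + eps0 * (u t₀ / lam0) :=
    (hineq t₀ ht₀).trans (add_le_add (hfmono ht₀ hT ht₀T)
      (mul_le_mul_of_nonneg_left hintegral heps0.le))
  exact (hmax ⟨hT, le_rfl⟩).trans (le_div_sub_mul_of_le_add_mul_div hlam0 hlt hmax_le)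

/-- Gronwall-type bound: if `u(t) ≤ f(t) + ε₀ ∫₀ᵗ e^{-λ₀(t-s)} u(s) ds` with
`0 < ε₀ < λ₀`, `f` nonnegative nondecreasing and `u` continuous nonnegative, then
`u(t) ≤ (λ₀/(λ₀-ε₀)) f(t)` for all `t ≥ 0`. -/
theorem stmt11 (eps0 lam0 : ℝ) (heps0 : 0 < eps0) (hlt : eps0 < lam0)
    (f : ℝ → ℝ) (hf0 : ∀ t : ℝ, 0 ≤ t → 0 ≤ f t) (hfmono : MonotoneOn f (Set.Ici 0))
    (u : ℝ → ℝ) (hu0 : ∀ t : ℝ, 0 ≤ t → 0 ≤ u t) (hucont : ContinuousOn u (Set.Ici 0))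
    (hineq : ∀ t : ℝ, 0 ≤ t →
      u t ≤ f t + eps0 * ∫ s in (0:ℝ)..t, Real.exp (-lam0 * (t - s)) * u s) :
    ∀ t : ℝ, 0 ≤ t → u t ≤ lam0 / (lam0 - eps0) * f t :=
  stmt11_general eps0 lam0 heps0 hlt f hfmono u hu0 hucont hineq
end

section
/- Let 0 < ε₀ < λ₀, let f : [0,∞) → [0,∞) be nondecreasing, and let u : [0,∞) → [0,∞) be a continuous function satisfying u(t) ≤ f(t) + ε₀ ∫₀ᵗ e^{−λ₀(t−s)} u(s) ds for all t ≥ 0. Then the function φ(t) := ∫₀ᵗ e^{λ₀ s} u(s) ds satisfies φ(t) ≤ e^{ε₀ t} ∫₀ᵗ f(s) e^{(λ₀−ε₀)s} ds for all t ≥ 0. -/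
/-!
Since `∫₀ᵗ e^{-λ₀(t-s)} u(s) ds = e^{-λ₀ t} φ(t)`, multiplying the hypothesis by `e^{λ₀ t}` gives
the differential inequality `φ' ≤ ε₀ φ + e^{λ₀ t} f`. The linear Gronwall argument integrates it:
`e^{-ε₀ t} φ(t)` has derivative at most `e^{(λ₀-ε₀)t} f(t)` and vanishes at `0`.
-/

open MeasureTheory Set

theorem exp_neg_mul_mul_sub_le_integral_of_deriv_le_mul_add {φ φ' h : ℝ → ℝ} {ε a b : ℝ}
    (hab : a ≤ b) (hφ : ContinuousOn φ (Icc a b)) (hφ' : ∀ x ∈ Ioo a b, HasDerivAt φ (φ' x) x)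
    (hφ'_int : IntervalIntegrable φ' volume a b) (hh : IntervalIntegrable h volume a b)
    (hle : ∀ x ∈ Ioo a b, φ' x ≤ ε * φ x + h x) :
    Real.exp (-ε * b) * φ b - Real.exp (-ε * a) * φ a ≤
      ∫ x in a..b, Real.exp (-ε * x) * h x := by
  have hexp : Continuous fun x : ℝ => Real.exp (-ε * x) := by fun_prop
  have hderiv : ∀ x ∈ Ioo a b, HasDerivAt (fun y => Real.exp (-ε * y) * φ y)
      (Real.exp (-ε * x) * (φ' x - ε * φ x)) x := by
    intro x hx
    have hexp' : HasDerivAt (fun y => Real.exp (-ε * y)) (Real.exp (-ε * x) * -ε) x := by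
      simpa using ((hasDerivAt_id x).const_mul (-ε)).exp
    exact (hexp'.fun_mul (hφ' x hx)).congr_deriv (by ring)
  have hint : IntervalIntegrable (fun x => Real.exp (-ε * x) * (φ' x - ε * φ x)) volume a b := by
    rw [← uIcc_of_le hab] at hφ
    exact (hφ'_int.sub (hφ.intervalIntegrable.const_mul ε)).continuousOn_mul hexp.continuousOn
  rw [← intervalIntegral.integral_eq_sub_of_hasDerivAt_of_le hab
    (hexp.continuousOn.fun_mul hφ) hderiv hint]
  refine intervalIntegral.integral_mono_on_of_le_Ioo hab hint
    (hh.continuousOn_mul hexp.continuousOn) fun x hx => ?_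
  gcongr
  linarith [hle x hx]

theorem integral_exp_neg_mul_sub_mul (lam s : ℝ) (u : ℝ → ℝ) :
    ∫ r in (0 : ℝ)..s, Real.exp (-lam * (s - r)) * u r =
      Real.exp (-lam * s) * ∫ r in (0 : ℝ)..s, Real.exp (lam * r) * u r := by
  rw [← intervalIntegral.integral_const_mul]
  refine intervalIntegral.integral_congr fun r _ => ?_
  simp only [← mul_assoc, ← Real.exp_add]
  ring_nf

theorem exp_mul_mul_le_of_le_add_mul_integral {lam ε x : ℝ} {f u : ℝ → ℝ}
    (hux : u x ≤ f x + ε * ∫ s in (0 : ℝ)..x, Real.exp (-lam * (x - s)) * u s) :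
    Real.exp (lam * x) * u x ≤
      ε * (∫ s in (0 : ℝ)..x, Real.exp (lam * s) * u s) + Real.exp (lam * x) * f x := by
  rw [integral_exp_neg_mul_sub_mul] at hux
  calc Real.exp (lam * x) * u x
      ≤ Real.exp (lam * x) * (f x + ε * (Real.exp (-lam * x) *
          ∫ s in (0 : ℝ)..x, Real.exp (lam * s) * u s)) := by gcongr
    _ = _ := by
      rw [neg_mul, Real.exp_neg]
      field_simp
      ring

theorem hasDerivAt_integral_of_continuousOn_Ici {g : ℝ → ℝ} {a x : ℝ}
    (hg : ContinuousOn g (Ici a)) (hx : a < x) :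
    HasDerivAt (fun y => ∫ s in a..y, g s) (g x) x :=
  intervalIntegral.integral_hasDerivAt_right
    ((hg.mono Icc_subset_Ici_self).intervalIntegrable_of_Icc hx.le)
    (hg.mono Ioi_subset_Ici_self |>.stronglyMeasurableAtFilter isOpen_Ioi x hx)
    (hg.continuousAt (Ici_mem_nhds hx))

theorem stmt12_general (eps0 lam0 : ℝ)
    (f : ℝ → ℝ) (hfmono : MonotoneOn f (Set.Ici 0))
    (u : ℝ → ℝ) (hucont : ContinuousOn u (Set.Ici 0))
    (hineq : ∀ t : ℝ, 0 ≤ t →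
      u t ≤ f t + eps0 * ∫ s in (0:ℝ)..t, Real.exp (-lam0 * (t - s)) * u s) :
    ∀ t : ℝ, 0 ≤ t →
      (∫ s in (0:ℝ)..t, Real.exp (lam0 * s) * u s) ≤
        Real.exp (eps0 * t) * ∫ s in (0:ℝ)..t, f s * Real.exp ((lam0 - eps0) * s) := by
  intro t ht
  set φ := fun y => ∫ s in (0:ℝ)..y, Real.exp (lam0 * s) * u s
  have hg : ContinuousOn (fun s => Real.exp (lam0 * s) * u s) (Ici 0) := by fun_prop
  have hφ : ContinuousOn φ (Icc 0 t) := by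
    rw [← uIcc_of_le ht]
    exact intervalIntegral.continuousOn_primitive_interval
      (hg.mono (uIcc_of_le ht ▸ Icc_subset_Ici_self) |>.integrableOn_compact isCompact_uIcc)
  have hf_int : IntervalIntegrable (fun x => Real.exp (lam0 * x) * f x) volume 0 t :=
    (hfmono.mono (uIcc_of_le ht ▸ Icc_subset_Ici_self)).intervalIntegrable.continuousOn_mul
      (by fun_prop)
  have hgronwall := exp_neg_mul_mul_sub_le_integral_of_deriv_le_mul_add ht hφ
    (fun x hx => hasDerivAt_integral_of_continuousOn_Ici hg hx.1)
    ((hg.mono Icc_subset_Ici_self).intervalIntegrable_of_Icc ht) hf_int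
    (fun x hx => exp_mul_mul_le_of_le_add_mul_integral (hineq x hx.1.le))
  have hφ0 : φ 0 = 0 := intervalIntegral.integral_same
  rw [hφ0, mul_zero, sub_zero] at hgronwall
  calc φ t = Real.exp (eps0 * t) * (Real.exp (-eps0 * t) * φ t) := by
        rw [← mul_assoc, ← Real.exp_add, neg_mul, add_neg_cancel, Real.exp_zero, one_mul]
    _ ≤ Real.exp (eps0 * t) *
          ∫ x in (0:ℝ)..t, Real.exp (-eps0 * x) * (Real.exp (lam0 * x) * f x) := by gcongr
    _ = Real.exp (eps0 * t) * ∫ s in (0:ℝ)..t, f s * Real.exp ((lam0 - eps0) * s) := by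
        congr 1
        refine intervalIntegral.integral_congr fun x _ => ?_
        rw [← mul_assoc, ← Real.exp_add, mul_comm]
        ring_nf

/-- Under the Gronwall-type hypothesis, `φ(t) := ∫₀ᵗ e^{λ₀ s} u(s) ds` satisfies
`φ(t) ≤ e^{ε₀ t} ∫₀ᵗ f(s) e^{(λ₀-ε₀)s} ds` for all `t ≥ 0`. -/
theorem stmt12 (eps0 lam0 : ℝ) (heps0 : 0 < eps0) (hlt : eps0 < lam0)
    (f : ℝ → ℝ) (hf0 : ∀ t : ℝ, 0 ≤ t → 0 ≤ f t) (hfmono : MonotoneOn f (Set.Ici 0))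
    (u : ℝ → ℝ) (hu0 : ∀ t : ℝ, 0 ≤ t → 0 ≤ u t) (hucont : ContinuousOn u (Set.Ici 0))
    (hineq : ∀ t : ℝ, 0 ≤ t →
      u t ≤ f t + eps0 * ∫ s in (0:ℝ)..t, Real.exp (-lam0 * (t - s)) * u s) :
    ∀ t : ℝ, 0 ≤ t →
      (∫ s in (0:ℝ)..t, Real.exp (lam0 * s) * u s) ≤
        Real.exp (eps0 * t) * ∫ s in (0:ℝ)..t, f s * Real.exp ((lam0 - eps0) * s) :=
  stmt12_general eps0 lam0 f hfmono u hucont hineq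
end
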